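/- arXiv:2408.06054 — 8 statements merged into one kernel-verified Lean document; each statement's English description precedes it below -/
import Mathlib

section
/- Let g ⊆ ℝ^{n×n} be a transposable Lie subalgebra and a ⊆ g a transposable Lie subalgebra with trace-orthogonal complement a⊥ in g. For c ∈ a⊥, the following are equivalent: (i) Tr(c·[x,y]) = 0 for all x ∈ a, y ∈ a⊥; (ii) [c, x] = 0 for all x ∈ a. -/
open Matrix

lemma aux_trace_mul_transpose_self_eq_zero {n : ℕ} (M : Matrix (Fin n) (Fin n) ℝ)
    (h : (M * Mᵀ).trace = 0) : M = 0 := by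
  have htr : (M * Mᵀ).trace = ∑ i, ∑ j, M i j * M i j := by
    simp [Matrix.trace, Matrix.mul_apply, Matrix.diag]
  rw [htr] at h
  ext i j
  have h1 : ∀ i ∈ (Finset.univ : Finset (Fin n)), (0:ℝ) ≤ ∑ j, M i j * M i j :=
    fun i _ => Finset.sum_nonneg fun j _ => mul_self_nonneg _
  have h2 := (Finset.sum_eq_zero_iff_of_nonneg h1).mp h i (Finset.mem_univ i)
  have h3 := (Finset.sum_eq_zero_iff_of_nonneg
    (fun j _ => mul_self_nonneg (M i j))).mp h2 j (Finset.mem_univ j)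
  simpa using mul_self_eq_zero.mp h3

/-- For transposable Lie subalgebras `a ⊆ g ⊆ ℝ^{n×n}` and `c` in the trace-orthogonal
complement `a⊥` of `a` in `g`: `Tr(c[x,y]) = 0` for all `x ∈ a, y ∈ a⊥` iff
`[c,x] = 0` for all `x ∈ a`. -/
theorem centralizer_characterization (n : ℕ)
    (g a : Submodule ℝ (Matrix (Fin n) (Fin n) ℝ))
    (hag : a ≤ g)
    (hg : ∀ x ∈ g, xᵀ ∈ g) (ha : ∀ x ∈ a, xᵀ ∈ a)
    (hgLie : ∀ x ∈ g, ∀ y ∈ g, x * y - y * x ∈ g)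
    (haLie : ∀ x ∈ a, ∀ y ∈ a, x * y - y * x ∈ a)
    (c : Matrix (Fin n) (Fin n) ℝ) (hcg : c ∈ g)
    (hcperp : ∀ z ∈ a, (c * z).trace = 0) :
    (∀ x ∈ a, ∀ y ∈ g, (∀ z ∈ a, (y * z).trace = 0) →
        (c * (x * y - y * x)).trace = 0) ↔
      (∀ x ∈ a, c * x - x * c = 0) := by
  -- key trace identity: Tr(c(xy - yx)) = Tr((cx - xc) y)
  have key : ∀ x y : Matrix (Fin n) (Fin n) ℝ,
      (c * (x * y - y * x)).trace = ((c * x - x * c) * y).trace := by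
    intro x y
    rw [Matrix.mul_sub, Matrix.sub_mul, Matrix.trace_sub, Matrix.trace_sub,
      ← Matrix.mul_assoc, Matrix.trace_mul_comm c (y * x), Matrix.mul_assoc y x c,
      Matrix.trace_mul_comm y (x * c)]
  -- cᵀ is also orthogonal to a
  have hctperp : ∀ z ∈ a, (cᵀ * z).trace = 0 := by
    intro z hz
    have : (cᵀ * z).trace = (c * zᵀ).trace := by
      rw [← Matrix.trace_transpose_mul c zᵀ, Matrix.transpose_transpose]
    rw [this]
    exact hcperp _ (ha z hz)
  constructor
  · intro h x hx
    set y : Matrix (Fin n) (Fin n) ℝ := xᵀ * cᵀ - cᵀ * xᵀ with hy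
    have hyg : y ∈ g := hgLie _ (hg x (hag hx)) _ (hg c hcg)
    have hyperp : ∀ z ∈ a, (y * z).trace = 0 := by
      intro z hz
      have : (y * z).trace = (cᵀ * (z * xᵀ - xᵀ * z)).trace := by
        rw [hy, Matrix.sub_mul, Matrix.mul_sub, Matrix.trace_sub, Matrix.trace_sub,
          Matrix.mul_assoc, Matrix.trace_mul_comm xᵀ (cᵀ * z), Matrix.mul_assoc,
          Matrix.mul_assoc]
      rw [this]
      exact hctperp _ (haLie z hz xᵀ (ha x hx))
    have h0 := h x hx y hyg hyperp
    rw [key x y] at h0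
    have hyt : y = (c * x - x * c)ᵀ := by
      rw [hy, Matrix.transpose_sub, Matrix.transpose_mul, Matrix.transpose_mul]
    rw [hyt] at h0
    exact aux_trace_mul_transpose_self_eq_zero _ h0
  · intro h x hx y hyg hyperp
    rw [key x y, h x hx, Matrix.zero_mul, Matrix.trace_zero]
end

section
/- Let g ⊆ ℝ^{n×n} be a transposable Lie subalgebra, a ⊆ g a transposable Lie subalgebra, and p_a : g → a the orthogonal projection under the trace form. For x, y ∈ g, the element [p_a(x), y] + [p_a(y), x] lies in the subspace [a, a⊥] spanned by commutators of elements of a with elements of a⊥ (where a⊥ is the trace-orthogonal complement of a in g). In particular it is trace-orthogonal to a. -/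
open Matrix

/-- For transposable Lie subalgebras `a ⊆ g ⊆ ℝ^{n×n}` with trace-orthogonal projection
`p_a : g → a`, the element `[p_a(x), y] + [p_a(y), x]` lies in the span of commutators
`[a, a⊥]`; in particular it is trace-orthogonal to `a`. -/
theorem bracket_projection_in_join (n : ℕ)
    (g a : Submodule ℝ (Matrix (Fin n) (Fin n) ℝ))
    (hag : a ≤ g)
    (hg : ∀ x ∈ g, xᵀ ∈ g) (ha : ∀ x ∈ a, xᵀ ∈ a)
    (hgLie : ∀ x ∈ g, ∀ y ∈ g, x * y - y * x ∈ g)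
    (haLie : ∀ x ∈ a, ∀ y ∈ a, x * y - y * x ∈ a)
    (p : Matrix (Fin n) (Fin n) ℝ →ₗ[ℝ] Matrix (Fin n) (Fin n) ℝ)
    (hpa : ∀ h ∈ g, p h ∈ a)
    (hpfix : ∀ u ∈ a, p u = u)
    (hporth : ∀ h ∈ g, ∀ u ∈ a, ((h - p h) * u).trace = 0) :
    ∀ x ∈ g, ∀ y ∈ g,
      ((p x * y - y * p x) + (p y * x - x * p y) ∈
          Submodule.span ℝ {m : Matrix (Fin n) (Fin n) ℝ |
            ∃ u ∈ a, ∃ w ∈ g, (∀ z ∈ a, (w * z).trace = 0) ∧ m = u * w - w * u}) ∧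
        (∀ z ∈ a, (((p x * y - y * p x) + (p y * x - x * p y)) * z).trace = 0) := by
  intro x hx y hy
  -- trace orthogonality of each generator-type commutator
  have tr0 : ∀ u ∈ a, ∀ w : Matrix (Fin n) (Fin n) ℝ,
      (∀ v ∈ a, (w * v).trace = 0) → ∀ z ∈ a, ((u * w - w * u) * z).trace = 0 := by
    intro u hu w hw z hz
    calc ((u * w - w * u) * z).trace
        = ((w * z) * u).trace - (w * (u * z)).trace := by
          rw [sub_mul, trace_sub, mul_assoc, mul_assoc, Matrix.trace_mul_comm]
      _ = (w * (z * u - u * z)).trace := by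
          rw [mul_assoc, mul_sub, trace_sub]
      _ = 0 := hw _ (haLie z hz u hu)
  have hw1 : ∀ v ∈ a, ((y - p y) * v).trace = 0 := hporth y hy
  have hw2 : ∀ v ∈ a, ((x - p x) * v).trace = 0 := hporth x hx
  have hw1g : y - p y ∈ g := Submodule.sub_mem g hy (hag (hpa y hy))
  have hw2g : x - p x ∈ g := Submodule.sub_mem g hx (hag (hpa x hx))
  have key : (p x * y - y * p x) + (p y * x - x * p y)
      = (p x * (y - p y) - (y - p y) * p x) + (p y * (x - p x) - (x - p x) * p y) := by
    noncomm_ring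
  constructor
  · rw [key]
    refine Submodule.add_mem _ (Submodule.subset_span ?_) (Submodule.subset_span ?_)
    · exact ⟨p x, hpa x hx, y - p y, hw1g, hw1, rfl⟩
    · exact ⟨p y, hpa y hy, x - p x, hw2g, hw2, rfl⟩
  · intro z hz
    rw [key, add_mul, trace_add, tr0 (p x) (hpa x hx) _ hw1 z hz,
      tr0 (p y) (hpa y hy) _ hw2 z hz, add_zero]
end

section
/- Let g ⊆ ℝ^{n×n} be a transposable Lie subalgebra, a ⊆ g a transposable Lie subalgebra, β ∈ ℝ, and p_a the trace-orthogonal projection onto a. For a fixed t ∈ g define the operator P_t on g by P_t(b) = (1/2)([b,t] + (1+β)([p_a(t), b] − [p_a(b), t])). Then P_t is antisymmetric with respect to the bilinear form ⟨x,y⟩_β := β₀(Tr(xy) − Tr(p_a(x)p_a(y))) − β₁ Tr(p_a(x)p_a(y)) with β = β₁/β₀: for all b, c ∈ g, ⟨P_t(b), c⟩_β + ⟨P_t(c), b⟩_β = 0. -/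
open Matrix

private lemma tr_cyc {n : ℕ} (x y z : Matrix (Fin n) (Fin n) ℝ) :
    (x * (y * z)).trace = (z * (x * y)).trace := by
  rw [← mul_assoc, ← mul_assoc]; exact Matrix.trace_mul_cycle x y z

private lemma tr_cyc' {n : ℕ} (x y z : Matrix (Fin n) (Fin n) ℝ) :
    (x * (y * z)).trace = (y * (z * x)).trace := by
  rw [← mul_assoc, ← mul_assoc]; exact (Matrix.trace_mul_cycle y z x).symm

private lemma aux_identity {n : ℕ} (b c t B C T : Matrix (Fin n) (Fin n) ℝ)
    (β₀ β₁ β : ℝ) (hββ : β₀ * (1 + β) = β₀ + β₁)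
    (K1 : (b * (C * T)).trace - (b * (T * C)).trace
        = (B * (C * T)).trace - (B * (T * C)).trace)
    (K2 : (c * (B * T)).trace - (c * (T * B)).trace
        = (C * (B * T)).trace - (C * (T * B)).trace) :
    β₀ * ((((1/2 : ℝ) • ((b * t - t * b) + (1 + β) • ((T * b - b * T) - (B * t - t * B)))) * c).trace
        - (((1/2 : ℝ) • ((b * t - t * b) + (1 + β) • ((T * b - b * T) - (B * t - t * B)))) * C).trace)
      - β₁ * (((1/2 : ℝ) • ((b * t - t * b) + (1 + β) • ((T * b - b * T) - (B * t - t * B)))) * C).trace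
      + (β₀ * ((((1/2 : ℝ) • ((c * t - t * c) + (1 + β) • ((T * c - c * T) - (C * t - t * C)))) * b).trace
        - (((1/2 : ℝ) • ((c * t - t * c) + (1 + β) • ((T * c - c * T) - (C * t - t * C)))) * B).trace)
      - β₁ * (((1/2 : ℝ) • ((c * t - t * c) + (1 + β) • ((T * c - c * T) - (C * t - t * C)))) * B).trace) = 0 := by
  simp only [smul_mul_assoc, add_mul, sub_mul, Matrix.trace_smul, Matrix.trace_add,
    Matrix.trace_sub, smul_eq_mul, mul_assoc]
  linear_combination
    (β₀/2) * (tr_cyc' b t c) - (β₀/2) * (tr_cyc t b c)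
    + (β₀*(1+β)/2) * (tr_cyc T b c) - (β₀*(1+β)/2) * (tr_cyc' b T c)
    + ((β₀+β₁)/2) * (- tr_cyc' B t c + tr_cyc t B c - tr_cyc' C t b + tr_cyc t C b)
    + ((-(B*(t*c)).trace + (t*(B*c)).trace - (C*(t*b)).trace + (t*(C*b)).trace)/2) * hββ
    - ((β₀+β₁)*(1+β)/2) * (- tr_cyc' B t C + tr_cyc t B C + tr_cyc' T b C
        + tr_cyc' T c B + K1 + K2 + tr_cyc' B C T - tr_cyc B T C)

/-- The parallel-transport generator `P_t(b) = (1/2)([b,t] + (1+β)([p_a(t),b] − [p_a(b),t]))`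
is antisymmetric with respect to the deformed bilinear form
`⟨x,y⟩_β = β₀(Tr(xy) − Tr(p_a(x)p_a(y))) − β₁ Tr(p_a(x)p_a(y))` with `β = β₁/β₀`. -/
theorem transport_operator_antisymmetric (n : ℕ)
    (g a : Submodule ℝ (Matrix (Fin n) (Fin n) ℝ))
    (hag : a ≤ g)
    (hg : ∀ x ∈ g, xᵀ ∈ g) (ha : ∀ x ∈ a, xᵀ ∈ a)
    (hgLie : ∀ x ∈ g, ∀ y ∈ g, x * y - y * x ∈ g)
    (haLie : ∀ x ∈ a, ∀ y ∈ a, x * y - y * x ∈ a)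
    (p : Matrix (Fin n) (Fin n) ℝ →ₗ[ℝ] Matrix (Fin n) (Fin n) ℝ)
    (hpa : ∀ h ∈ g, p h ∈ a)
    (hpfix : ∀ u ∈ a, p u = u)
    (hporth : ∀ h ∈ g, ∀ u ∈ a, ((h - p h) * u).trace = 0)
    (β₀ β₁ : ℝ) (hβ₀ : β₀ ≠ 0) (hβ₁ : β₁ ≠ 0)
    (β : ℝ) (hβ : β = β₁ / β₀)
    (t : Matrix (Fin n) (Fin n) ℝ) (ht : t ∈ g)
    (P : Matrix (Fin n) (Fin n) ℝ → Matrix (Fin n) (Fin n) ℝ)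
    (hP : ∀ b, P b = (1/2 : ℝ) •
      ((b * t - t * b) + (1 + β) • ((p t * b - b * p t) - (p b * t - t * p b))))
    (form : Matrix (Fin n) (Fin n) ℝ → Matrix (Fin n) (Fin n) ℝ → ℝ)
    (hform : ∀ x y, form x y =
      β₀ * ((x * y).trace - (p x * p y).trace) - β₁ * (p x * p y).trace) :
    ∀ b ∈ g, ∀ c ∈ g, form (P b) c + form (P c) b = 0 := by
  intro b hb c hc
  -- key orthogonality identity
  have key : ∀ h ∈ g, ∀ u ∈ a, (h * u).trace = (p h * u).trace := by
    intro h hh u hu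
    have := hporth h hh u hu
    rw [sub_mul, Matrix.trace_sub] at this
    linarith
  -- memberships
  have hBa : p b ∈ a := hpa b hb
  have hCa : p c ∈ a := hpa c hc
  have hTa : p t ∈ a := hpa t ht
  have hPmem : ∀ x ∈ g, P x ∈ g := by
    intro x hx
    rw [hP]
    exact Submodule.smul_mem _ _ (Submodule.add_mem _ (hgLie x hx t ht)
      (Submodule.smul_mem _ _ (Submodule.sub_mem _
        (hgLie _ (hag (hpa t ht)) _ hx) (hgLie _ (hag (hpa x hx)) _ ht))))
  have e1 : (p (P b) * p c).trace = (P b * p c).trace :=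
    (key _ (hPmem b hb) _ hCa).symm
  have e2 : (p (P c) * p b).trace = (P c * p b).trace :=
    (key _ (hPmem c hc) _ hBa).symm
  have hββ : β₀ * (1 + β) = β₀ + β₁ := by
    rw [hβ]; field_simp
  have K1 : (b * (p c * p t)).trace - (b * (p t * p c)).trace
      = (p b * (p c * p t)).trace - (p b * (p t * p c)).trace := by
    have := key b hb _ (haLie _ hCa _ hTa)
    rw [mul_sub, mul_sub, Matrix.trace_sub, Matrix.trace_sub] at this
    linarith
  have K2 : (c * (p b * p t)).trace - (c * (p t * p b)).trace
      = (p c * (p b * p t)).trace - (p c * (p t * p b)).trace := by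
    have := key c hc _ (haLie _ hBa _ hTa)
    rw [mul_sub, mul_sub, Matrix.trace_sub, Matrix.trace_sub] at this
    linarith
  rw [hform, hform, e1, e2, hP b, hP c]
  exact aux_identity b c t (p b) (p c) (p t) β₀ β₁ β hββ K1 K2
end

section
/- Let g be a transposable Lie subalgebra of ℝ^{n×n}, a ⊆ g a transposable Lie subalgebra, p_a the trace/Frobenius orthogonal projection onto a, β ∈ ℝ, and t ∈ g. The adjoint, under the Frobenius inner product Tr(xyᵀ) on g, of the operator P_t(b) = (1/2)([b,t] + (1+β)([p_a(t), b] − [p_a(b), t])) is given by P_tᵀ(b) = (1/2)([b, tᵀ] + (1+β)([p_a(t)ᵀ, b] − p_a([b, tᵀ]))). -/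
open Matrix

/-- Frobenius trace swap: `Tr(X Yᵀ) = Tr(Y Xᵀ)`. -/
lemma trace_mul_transpose_swap {n : ℕ} (X Y : Matrix (Fin n) (Fin n) ℝ) :
    (X * Yᵀ).trace = (Y * Xᵀ).trace := by
  rw [← Matrix.trace_transpose (X * Yᵀ), Matrix.transpose_mul, Matrix.transpose_transpose,
    Matrix.trace_mul_comm]

/-- The adjoint, under the Frobenius inner product `⟨x,y⟩_F = Tr(xyᵀ)` on `g`, of
`P_t(b) = (1/2)([b,t] + (1+β)([p_a(t),b] − [p_a(b),t]))` is
`P_tᵀ(b) = (1/2)([b,tᵀ] + (1+β)([p_a(t)ᵀ,b] − p_a([b,tᵀ])))`. -/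
theorem transport_operator_adjoint (n : ℕ)
    (g a : Submodule ℝ (Matrix (Fin n) (Fin n) ℝ))
    (hag : a ≤ g)
    (hg : ∀ x ∈ g, xᵀ ∈ g) (ha : ∀ x ∈ a, xᵀ ∈ a)
    (hgLie : ∀ x ∈ g, ∀ y ∈ g, x * y - y * x ∈ g)
    (haLie : ∀ x ∈ a, ∀ y ∈ a, x * y - y * x ∈ a)
    (p : Matrix (Fin n) (Fin n) ℝ →ₗ[ℝ] Matrix (Fin n) (Fin n) ℝ)
    (hpa : ∀ h ∈ g, p h ∈ a)
    (hpfix : ∀ u ∈ a, p u = u)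
    (hporth : ∀ h ∈ g, ∀ u ∈ a, ((h - p h) * uᵀ).trace = 0)
    (β : ℝ)
    (t : Matrix (Fin n) (Fin n) ℝ) (ht : t ∈ g)
    (P Padj : Matrix (Fin n) (Fin n) ℝ → Matrix (Fin n) (Fin n) ℝ)
    (hP : ∀ b, P b = (1/2 : ℝ) •
      ((b * t - t * b) + (1 + β) • ((p t * b - b * p t) - (p b * t - t * p b))))
    (hPadj : ∀ b, Padj b = (1/2 : ℝ) •
      ((b * tᵀ - tᵀ * b) + (1 + β) • (((p t)ᵀ * b - b * (p t)ᵀ) - p (b * tᵀ - tᵀ * b)))) :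
    ∀ b ∈ g, ∀ c ∈ g, (P b * cᵀ).trace = (b * (Padj c)ᵀ).trace := by
  intro b hb c hc
  have hwg : c * tᵀ - tᵀ * c ∈ g := hgLie c hc tᵀ (hg t ht)
  have e1 : ((b - p b) * (p (c * tᵀ - tᵀ * c))ᵀ).trace = 0 :=
    hporth b hb _ (hpa _ hwg)
  have e2 : ((c * tᵀ - tᵀ * c - p (c * tᵀ - tᵀ * c)) * (p b)ᵀ).trace = 0 :=
    hporth _ hwg _ (hpa b hb)
  have c1 : (t * (b * cᵀ)).trace = (b * (cᵀ * t)).trace := by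
    rw [Matrix.trace_mul_comm, mul_assoc]
  have c2 : (p t * (b * cᵀ)).trace = (b * (cᵀ * p t)).trace := by
    rw [Matrix.trace_mul_comm, mul_assoc]
  have c3 : (c * (tᵀ * (p b)ᵀ)).trace = (p b * (t * cᵀ)).trace := by
    have := trace_mul_transpose_swap c (p b * t)
    simpa [Matrix.transpose_mul, mul_assoc] using this
  have c4 : (tᵀ * (c * (p b)ᵀ)).trace = (t * (p b * cᵀ)).trace := by
    rw [← mul_assoc, trace_mul_transpose_swap, Matrix.transpose_mul,
      Matrix.transpose_transpose, ← mul_assoc, Matrix.trace_mul_comm]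
  have c5 : (p (c * tᵀ - tᵀ * c) * (p b)ᵀ).trace = (p b * (p (c * tᵀ - tᵀ * c))ᵀ).trace :=
    trace_mul_transpose_swap _ _
  rw [hP, hPadj]
  simp only [Matrix.transpose_smul, Matrix.transpose_add, Matrix.transpose_sub,
    Matrix.transpose_mul, Matrix.transpose_transpose, Matrix.smul_mul, Matrix.mul_smul,
    Matrix.add_mul, Matrix.sub_mul, Matrix.mul_add, Matrix.mul_sub, mul_assoc,
    Matrix.trace_smul, Matrix.trace_add, Matrix.trace_sub, smul_eq_mul] at *
  linear_combination (-(1/2 : ℝ)) * c1 + ((1 + β)/2) * c2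
    + (-(1 + β)/2) * (e2 - e1 - c3 + c4 + c5)
end

section
/- Let g be a transposable Lie subalgebra of ℝ^{n×n} and a ⊆ g a transposable Lie subalgebra. Define the symmetric bilinear form ⟨x,y⟩_β = β₀(Tr(xy) − Tr(p_a(x)p_a(y))) − β₁ Tr(p_a(x)p_a(y)) with β₀β₁ ≠ 0. Then this form is nondegenerate on g. -/
open Matrix

/-- If `Tr(A * Aᵀ) = 0` then `A = 0` (positivity of the Frobenius norm). -/
lemma eq_zero_of_trace_mul_transpose {n : ℕ} (A : Matrix (Fin n) (Fin n) ℝ)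
    (h : (A * Aᵀ).trace = 0) : A = 0 := by
  have htr : (A * Aᵀ).trace = ∑ i, ∑ j, A i j * A i j := by
    simp [Matrix.trace, Matrix.mul_apply, Matrix.diag]
  rw [htr] at h
  ext i j
  have h1 : ∀ i ∈ Finset.univ, (0:ℝ) ≤ ∑ j, A i j * A i j := fun i _ =>
    Finset.sum_nonneg fun j _ => mul_self_nonneg _
  have h2 := (Finset.sum_eq_zero_iff_of_nonneg h1).mp h i (Finset.mem_univ i)
  have h3 := (Finset.sum_eq_zero_iff_of_nonneg
    (fun j _ => mul_self_nonneg (A i j))).mp h2 j (Finset.mem_univ j)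
  simpa using mul_self_eq_zero.mp h3

/-- The deformed bilinear form
`⟨x,y⟩_β = β₀(Tr(xy) − Tr(p_a(x)p_a(y))) − β₁ Tr(p_a(x)p_a(y))`, `β₀β₁ ≠ 0`,
is nondegenerate on a transposable Lie subalgebra `g`. -/
theorem deformed_metric_nondegenerate (n : ℕ)
    (g a : Submodule ℝ (Matrix (Fin n) (Fin n) ℝ))
    (hag : a ≤ g)
    (hg : ∀ x ∈ g, xᵀ ∈ g) (ha : ∀ x ∈ a, xᵀ ∈ a)
    (hgLie : ∀ x ∈ g, ∀ y ∈ g, x * y - y * x ∈ g)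
    (haLie : ∀ x ∈ a, ∀ y ∈ a, x * y - y * x ∈ a)
    (p : Matrix (Fin n) (Fin n) ℝ →ₗ[ℝ] Matrix (Fin n) (Fin n) ℝ)
    (hpa : ∀ h ∈ g, p h ∈ a)
    (hpfix : ∀ u ∈ a, p u = u)
    (hporth : ∀ h ∈ g, ∀ u ∈ a, ((h - p h) * u).trace = 0)
    (β₀ β₁ : ℝ) (hβ₀ : β₀ ≠ 0) (hβ₁ : β₁ ≠ 0)
    (form : Matrix (Fin n) (Fin n) ℝ → Matrix (Fin n) (Fin n) ℝ → ℝ)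
    (hform : ∀ x y, form x y =
      β₀ * ((x * y).trace - (p x * p y).trace) - β₁ * (p x * p y).trace) :
    ∀ x ∈ g, (∀ y ∈ g, form x y = 0) → x = 0 := by
  intro x hx hx0
  -- Step 1: Tr(p x * u) = Tr(x * u) for u ∈ a
  have horth : ∀ u ∈ a, (x * u).trace = (p x * u).trace := by
    intro u hu
    have := hporth x hx u hu
    rw [Matrix.sub_mul, Matrix.trace_sub] at this
    linarith
  -- Step 2: p x = 0
  have hpx : p x = 0 := by
    have hy : (p x)ᵀ ∈ a := ha _ (hpa x hx)
    have hform0 := hx0 _ (hag hy)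
    rw [hform x _] at hform0
    rw [hpfix _ hy, ← horth _ hy] at hform0
    have : (x * (p x)ᵀ).trace = (p x * (p x)ᵀ).trace := horth _ hy
    rw [this] at hform0
    have h0 : (p x * (p x)ᵀ).trace = 0 := by
      have : -β₁ * (p x * (p x)ᵀ).trace = 0 := by linarith
      rcases mul_eq_zero.mp this with h | h
      · exact absurd (neg_eq_zero.mp h) hβ₁
      · exact h
    exact eq_zero_of_trace_mul_transpose _ h0
  -- Step 3: Tr(x * y) = 0 for all y ∈ g, in particular y = xᵀ
  have hform2 := hx0 _ (hg x hx)
  rw [hform x xᵀ, hpx] at hform2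
  simp only [Matrix.zero_mul, Matrix.trace_zero, mul_zero, sub_zero] at hform2
  rcases mul_eq_zero.mp hform2 with h | h
  · exact absurd h hβ₀
  · exact eq_zero_of_trace_mul_transpose _ h
end

section
/- Let Y ∈ St(n,d), ξ = YA + QR a tangent vector as usual, and η tangent at Y. In the α-metric ⟨ζ₁,ζ₂⟩ = Tr(ζ₁ᵀζ₂) + (α−1)Tr(ζ₁ᵀYYᵀζ₂) with α > 0, the condition that η is orthogonal to the subspace S = {YV_Y + QV_Q with YV_Y + QV_Q tangent at Y} (intersected with the tangent space at Y) is equivalent to Yᵀη = 0 and Qᵀη = 0. -/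
open Matrix

private lemma trace_transpose_mul_self_eq_zero {m n : ℕ} (M : Matrix (Fin m) (Fin n) ℝ)
    (h : (Mᵀ * M).trace = 0) : M = 0 := by
  have key : ∀ i j, M i j = 0 := by
    have h' : (∑ j, ∑ i, M i j * M i j) = 0 := by
      simpa [Matrix.trace, Matrix.diag, Matrix.mul_apply] using h
    have hnn : ∀ j ∈ (Finset.univ : Finset (Fin n)), (0:ℝ) ≤ ∑ i, M i j * M i j := by
      intro j _; exact Finset.sum_nonneg fun i _ => mul_self_nonneg _
    intro i j
    have hj : (∑ i, M i j * M i j) = 0 :=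
      (Finset.sum_eq_zero_iff_of_nonneg hnn).mp h' j (Finset.mem_univ j)
    have hij : M i j * M i j = 0 :=
      (Finset.sum_eq_zero_iff_of_nonneg (fun i _ => mul_self_nonneg _)).mp hj i
        (Finset.mem_univ i)
    exact mul_self_eq_zero.mp hij
  ext i j; exact key i j

/-- In the α-metric `⟨ζ₁,ζ₂⟩ = Tr(ζ₁ᵀζ₂) + (α−1)Tr(ζ₁ᵀYYᵀζ₂)`, a tangent vector `η` at
`Y ∈ St(n,d)` is orthogonal to all tangent vectors of the form `YA₁ + QR₁`
(`A₁` antisymmetric) iff `Yᵀη = 0` and `Qᵀη = 0`. -/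
theorem stiefel_normal_characterization (n d k : ℕ) (α : ℝ) (hα : 0 < α)
    (Y : Matrix (Fin n) (Fin d) ℝ) (hY : Yᵀ * Y = 1)
    (Q : Matrix (Fin n) (Fin k) ℝ) (hQ : Qᵀ * Q = 1) (hYQ : Yᵀ * Q = 0)
    (η : Matrix (Fin n) (Fin d) ℝ) (hηtan : (Yᵀ * η)ᵀ = -(Yᵀ * η)) :
    (∀ (A₁ : Matrix (Fin d) (Fin d) ℝ) (R₁ : Matrix (Fin k) (Fin d) ℝ),
        A₁ᵀ = -A₁ →
        (ηᵀ * (Y * A₁ + Q * R₁)).trace +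
          (α - 1) * (ηᵀ * Y * Yᵀ * (Y * A₁ + Q * R₁)).trace = 0) ↔
      (Yᵀ * η = 0 ∧ Qᵀ * η = 0) := by
  set B := Yᵀ * η with hB
  set C := Qᵀ * η with hC
  have hηY : ηᵀ * Y = -B := by
    have hBt : Bᵀ = ηᵀ * Y := by rw [hB, Matrix.transpose_mul, Matrix.transpose_transpose]
    rw [← hBt, hηtan]
  have hηQ : ηᵀ * Q = Cᵀ := by simp [hC, Matrix.transpose_mul]
  -- key simplification of the pairing
  have hval : ∀ (A₁ : Matrix (Fin d) (Fin d) ℝ) (R₁ : Matrix (Fin k) (Fin d) ℝ),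
      (ηᵀ * (Y * A₁ + Q * R₁)).trace +
        (α - 1) * (ηᵀ * Y * Yᵀ * (Y * A₁ + Q * R₁)).trace
      = α * (-B * A₁).trace + (Cᵀ * R₁).trace := by
    intro A₁ R₁
    have h1 : ηᵀ * (Y * A₁ + Q * R₁) = -B * A₁ + Cᵀ * R₁ := by
      rw [Matrix.mul_add, ← Matrix.mul_assoc, ← Matrix.mul_assoc, hηY, hηQ]
    have h2 : ηᵀ * Y * Yᵀ * (Y * A₁ + Q * R₁) = -B * A₁ := by
      rw [Matrix.mul_add]
      have e1 : ηᵀ * Y * Yᵀ * (Y * A₁) = -B * A₁ := by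
        rw [hηY, Matrix.mul_assoc (-B) Yᵀ (Y * A₁), ← Matrix.mul_assoc Yᵀ Y A₁, hY, one_mul]
      have e2 : ηᵀ * Y * Yᵀ * (Q * R₁) = 0 := by
        rw [Matrix.mul_assoc, ← Matrix.mul_assoc Yᵀ, hYQ]
        simp
      rw [e1, e2, add_zero]
    rw [h1, h2, Matrix.trace_add]
    ring
  constructor
  · intro hortho
    have hBanti : Bᵀ = -B := hηtan
    have hB0 : B = 0 := by
      have h := hval B 0
      rw [hortho B 0 hBanti] at h
      have : (Bᵀ * B).trace = 0 := by
        have h' : α * (-B * B).trace = 0 := by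
          simpa using h.symm
        have h'' : (-B * B).trace = 0 := by
          rcases mul_eq_zero.mp h' with h | h
          · exact absurd h (ne_of_gt hα)
          · exact h
        rw [hBanti]
        exact h''
      exact trace_transpose_mul_self_eq_zero B this
    have hC0 : C = 0 := by
      have h := hval 0 C
      rw [hortho 0 C (by simp)] at h
      have : (Cᵀ * C).trace = 0 := by simpa using h.symm
      exact trace_transpose_mul_self_eq_zero C this
    exact ⟨hB0, hC0⟩
  · rintro ⟨hB0, hC0⟩ A₁ R₁ hA₁
    rw [hval A₁ R₁, hB0, hC0]
    simp
end

section
/- Fix α > 0, A ∈ ℝ^{d×d} antisymmetric, R ∈ ℝ^{k×d}. Define the operator P on pairs w = (w_a, w_r) with w_a ∈ ℝ^{d×d} antisymmetric and w_r ∈ ℝ^{k×d} by P(w) = (skew((4α−1)w_a A + Rᵀ w_r), α(w_r A − R w_a)), where skew(M) = (M − Mᵀ)/2. Let s_c scale the first component by c and fix the second. Then the conjugated operator P^bal = s_{√α} ∘ P ∘ s_{1/√α} is antisymmetric with respect to the Frobenius inner product ⟨(u_a,u_r),(v_a,v_r)⟩ = Tr(u_aᵀv_a) + Tr(u_rᵀv_r)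 on the space of such pairs. -/
open Matrix

/-- The skew part of a square matrix, `(M − Mᵀ)/2`. -/
noncomputable def mskew {d : ℕ} (M : Matrix (Fin d) (Fin d) ℝ) :
    Matrix (Fin d) (Fin d) ℝ := (1/2 : ℝ) • (M - Mᵀ)

/-- The Stiefel parallel-transport operator
`P(w_a, w_r) = (skew((4α−1)w_a A + Rᵀ w_r), α(w_r A − R w_a))`. -/
noncomputable def stiefelP {d k : ℕ} (α : ℝ) (A : Matrix (Fin d) (Fin d) ℝ)
    (R : Matrix (Fin k) (Fin d) ℝ)
    (w : Matrix (Fin d) (Fin d) ℝ × Matrix (Fin k) (Fin d) ℝ) :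
    Matrix (Fin d) (Fin d) ℝ × Matrix (Fin k) (Fin d) ℝ :=
  (mskew ((4 * α - 1) • (w.1 * A) + Rᵀ * w.2), α • (w.2 * A - R * w.1))

/-- The scaling `s_c` of the first component of a pair. -/
def pairScale {d k : ℕ} (c : ℝ)
    (w : Matrix (Fin d) (Fin d) ℝ × Matrix (Fin k) (Fin d) ℝ) :
    Matrix (Fin d) (Fin d) ℝ × Matrix (Fin k) (Fin d) ℝ := (c • w.1, w.2)

/-! With `c = √α`, the off-diagonal blocks `c · Rᵀ w_r` and `−c · R w_a` are minus each
other's adjoints, the diagonal blocks `w ↦ w A` are antisymmetric for the Frobenius pairing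
because `A` is, and the projection `skew` is invisible against antisymmetric matrices. -/

namespace Matrix

variable {m n 𝕜 : Type*} [Fintype m] [Fintype n] [CommRing 𝕜]

theorem trace_transpose_mul_symm (X Y : Matrix m n 𝕜) : (Xᵀ * Y).trace = (Yᵀ * X).trace := by
  rw [← trace_transpose, transpose_mul, transpose_transpose]

theorem trace_transpose_mul_mul_add_swap_eq_zero_of_transpose_eq_neg {A : Matrix n n 𝕜}
    (hA : Aᵀ = -A) (X Y : Matrix m n 𝕜) :
    ((X * A)ᵀ * Y).trace + ((Y * A)ᵀ * X).trace = 0 := by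
  have hXY : ((Y * A)ᵀ * X).trace = (A * (Xᵀ * Y)).trace := by
    rw [trace_transpose_mul_symm, ← Matrix.mul_assoc, trace_mul_comm]
  rw [hXY, transpose_mul, hA, Matrix.mul_assoc, Matrix.neg_mul, trace_neg, neg_add_cancel]

theorem trace_transpose_mul_transpose_mul {p : Type*} [Fintype p] (R : Matrix p m 𝕜)
    (X : Matrix p n 𝕜) (Y : Matrix m n 𝕜) :
    ((Rᵀ * X)ᵀ * Y).trace = ((R * Y)ᵀ * X).trace := by
  rw [trace_transpose_mul_symm, transpose_mul, Matrix.mul_assoc]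

end Matrix

theorem trace_transpose_mskew_mul {d : ℕ} (M : Matrix (Fin d) (Fin d) ℝ)
    {Y : Matrix (Fin d) (Fin d) ℝ} (hY : Yᵀ = -Y) :
    ((mskew M)ᵀ * Y).trace = (Mᵀ * Y).trace := by
  have hMY : (M * Y).trace = -(Mᵀ * Y).trace := by
    rw [← trace_transpose_mul, hY, Matrix.mul_neg, trace_neg]
  simp only [mskew, transpose_smul, transpose_sub, transpose_transpose, Matrix.smul_mul,
    Matrix.sub_mul, trace_smul, trace_sub, hMY, smul_eq_mul]
  ring

section Balanced

variable {d k : ℕ} (α c : ℝ) (A : Matrix (Fin d) (Fin d) ℝ) (R : Matrix (Fin k) (Fin d) ℝ)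
  (w : Matrix (Fin d) (Fin d) ℝ × Matrix (Fin k) (Fin d) ℝ)

theorem trace_transpose_pairScale_stiefelP_fst_mul {Y : Matrix (Fin d) (Fin d) ℝ}
    (hY : Yᵀ = -Y) (hc : c ≠ 0) :
    ((pairScale c (stiefelP α A R (pairScale c⁻¹ w))).1ᵀ * Y).trace =
      (4 * α - 1) * ((w.1 * A)ᵀ * Y).trace + c * ((Rᵀ * w.2)ᵀ * Y).trace := by
  simp only [pairScale, stiefelP, transpose_smul, Matrix.smul_mul, trace_smul,
    trace_transpose_mskew_mul _ hY, transpose_add, Matrix.add_mul, trace_add, smul_eq_mul]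
  field_simp

theorem trace_transpose_pairScale_stiefelP_snd_mul (Y : Matrix (Fin k) (Fin d) ℝ) :
    ((pairScale c (stiefelP α A R (pairScale c⁻¹ w))).2ᵀ * Y).trace =
      α * ((w.2 * A)ᵀ * Y).trace - α * c⁻¹ * ((R * w.1)ᵀ * Y).trace := by
  simp only [pairScale, stiefelP, transpose_smul, transpose_sub, Matrix.smul_mul, Matrix.sub_mul,
    Matrix.mul_smul, trace_smul, trace_sub, smul_eq_mul]
  ring

end Balanced

/-- The conjugated operator `P^bal = s_{√α} ∘ P ∘ s_{1/√α}` is antisymmetric with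
respect to the Frobenius inner product
`⟨(u_a,u_r),(v_a,v_r)⟩ = Tr(u_aᵀ v_a) + Tr(u_rᵀ v_r)` on pairs with antisymmetric
first components. -/
theorem stiefelP_balanced_antisymmetric (d k : ℕ) (α : ℝ) (hα : 0 < α)
    (A : Matrix (Fin d) (Fin d) ℝ) (hA : Aᵀ = -A)
    (R : Matrix (Fin k) (Fin d) ℝ)
    (u v : Matrix (Fin d) (Fin d) ℝ × Matrix (Fin k) (Fin d) ℝ)
    (hu : u.1ᵀ = -u.1) (hv : v.1ᵀ = -v.1) :
    ((pairScale (Real.sqrt α) (stiefelP α A R (pairScale (Real.sqrt α)⁻¹ u))).1ᵀ *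
        v.1).trace +
      ((pairScale (Real.sqrt α) (stiefelP α A R (pairScale (Real.sqrt α)⁻¹ u))).2ᵀ *
        v.2).trace +
      (((pairScale (Real.sqrt α) (stiefelP α A R (pairScale (Real.sqrt α)⁻¹ v))).1ᵀ *
        u.1).trace +
      ((pairScale (Real.sqrt α) (stiefelP α A R (pairScale (Real.sqrt α)⁻¹ v))).2ᵀ *
        u.2).trace) = 0 := by
  set c := Real.sqrt α
  have hc : c ≠ 0 := (Real.sqrt_pos.mpr hα).ne'
  have hαc : α * c⁻¹ = c := by rw [← Real.mul_self_sqrt hα.le, mul_inv_cancel_right₀ hc]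
  rw [trace_transpose_pairScale_stiefelP_fst_mul _ _ _ _ _ hv hc,
    trace_transpose_pairScale_stiefelP_fst_mul _ _ _ _ _ hu hc,
    trace_transpose_pairScale_stiefelP_snd_mul, trace_transpose_pairScale_stiefelP_snd_mul, hαc,
    trace_transpose_mul_transpose_mul R u.2, trace_transpose_mul_transpose_mul R v.2]
  linear_combination
    (4 * α - 1) * trace_transpose_mul_mul_add_swap_eq_zero_of_transpose_eq_neg hA u.1 v.1 +
    α * trace_transpose_mul_mul_add_swap_eq_zero_of_transpose_eq_neg hA u.2 v.2
end

section
/- Let R ∈ ℝ^{k×d} factor as R = ΣVᵀ, where V ∈ ℝ^{d×k} with VᵀV = I_k and Σ ∈ ℝ^{k×k} is symmetric (so that cos(tΣ), sin(tΣ) are defined by power series), and let C = [[V,0],[0,I_k]] ∈ ℝ^{(d+k)×(2k)}. Then expm(t[[0,−Rᵀ],[R,0]]) = [[I_d − VVᵀ, 0],[0,0]] + C·[[cos(tΣ), −sin(tΣ)],[sin(tΣ), cos(tΣ)]]·Cᵀ. -/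
open Matrix NormedSpace

/-- Matrix cosine, defined by its power series. -/
noncomputable def mcos {k : ℕ} (M : Matrix (Fin k) (Fin k) ℝ) :
    Matrix (Fin k) (Fin k) ℝ :=
  ∑' j : ℕ, ((-1 : ℝ) ^ j / (2 * j).factorial) • M ^ (2 * j)

/-- Matrix sine, defined by its power series. -/
noncomputable def msin {k : ℕ} (M : Matrix (Fin k) (Fin k) ℝ) :
    Matrix (Fin k) (Fin k) ℝ :=
  ∑' j : ℕ, ((-1 : ℝ) ^ j / (2 * j + 1).factorial) • M ^ (2 * j + 1)

section Helpers

lemma fromBlocks_decomp {l m n o : Type*} (A : Matrix n l ℝ) (B : Matrix n m ℝ)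
    (C : Matrix o l ℝ) (D : Matrix o m ℝ) :
    fromBlocks A 0 0 0 + fromBlocks 0 B 0 0 + fromBlocks 0 0 C 0 + fromBlocks 0 0 0 D =
      fromBlocks A B C D := by
  rw [fromBlocks_add, fromBlocks_add, fromBlocks_add]
  simp

lemma hasSum_fromBlocks {X l m n o : Type*}
    {f₁ : X → Matrix n l ℝ} {f₂ : X → Matrix n m ℝ} {f₃ : X → Matrix o l ℝ}
    {f₄ : X → Matrix o m ℝ} {A : Matrix n l ℝ} {B : Matrix n m ℝ} {C : Matrix o l ℝ}
    {D : Matrix o m ℝ}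
    (h₁ : HasSum f₁ A) (h₂ : HasSum f₂ B) (h₃ : HasSum f₃ C) (h₄ : HasSum f₄ D) :
    HasSum (fun x => fromBlocks (f₁ x) (f₂ x) (f₃ x) (f₄ x)) (fromBlocks A B C D) := by
  have e₁ := h₁.map
    (AddMonoidHom.mk' (fun A : Matrix n l ℝ => (fromBlocks A 0 0 0 : Matrix (n ⊕ o) (l ⊕ m) ℝ))
      (fun a b => by rw [Matrix.fromBlocks_add]; simp))
    (Continuous.matrix_fromBlocks continuous_id continuous_const continuous_const continuous_const)
  have e₂ := h₂.map
    (AddMonoidHom.mk' (fun B : Matrix n m ℝ => (fromBlocks 0 B 0 0 : Matrix (n ⊕ o) (l ⊕ m) ℝ))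
      (fun a b => by rw [Matrix.fromBlocks_add]; simp))
    (Continuous.matrix_fromBlocks continuous_const continuous_id continuous_const continuous_const)
  have e₃ := h₃.map
    (AddMonoidHom.mk' (fun C : Matrix o l ℝ => (fromBlocks 0 0 C 0 : Matrix (n ⊕ o) (l ⊕ m) ℝ))
      (fun a b => by rw [Matrix.fromBlocks_add]; simp))
    (Continuous.matrix_fromBlocks continuous_const continuous_const continuous_id continuous_const)
  have e₄ := h₄.map
    (AddMonoidHom.mk' (fun D : Matrix o m ℝ => (fromBlocks 0 0 0 D : Matrix (n ⊕ o) (l ⊕ m) ℝ))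
      (fun a b => by rw [Matrix.fromBlocks_add]; simp))
    (Continuous.matrix_fromBlocks continuous_const continuous_const continuous_const continuous_id)
  have key := ((e₁.add e₂).add e₃).add e₄
  have key' : HasSum (fun x => fromBlocks (f₁ x) 0 0 0 + fromBlocks 0 (f₂ x) 0 0 +
      fromBlocks 0 0 (f₃ x) 0 + fromBlocks 0 0 0 (f₄ x))
      (fromBlocks A 0 0 0 + fromBlocks 0 B 0 0 + fromBlocks 0 0 C 0 + fromBlocks 0 0 0 D) := key
  have hfun : (fun x => fromBlocks (f₁ x) 0 0 0 + fromBlocks 0 (f₂ x) 0 0 +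
      fromBlocks 0 0 (f₃ x) 0 + fromBlocks 0 0 0 (f₄ x)) =
      fun x => fromBlocks (f₁ x) (f₂ x) (f₃ x) (f₄ x) := by
    funext x; exact fromBlocks_decomp _ _ _ _
  rw [hfun, fromBlocks_decomp] at key'
  exact key'

lemma hasSum_mcos {k : ℕ} (M : Matrix (Fin k) (Fin k) ℝ) :
    HasSum (fun j : ℕ => ((-1 : ℝ) ^ j / (2 * j).factorial) • M ^ (2 * j)) (mcos M) := by
  letI : NormedRing (Matrix (Fin k) (Fin k) ℝ) := Matrix.linftyOpNormedRing
  letI : NormedAlgebra ℝ (Matrix (Fin k) (Fin k) ℝ) := Matrix.linftyOpNormedAlgebra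
  have hb : Summable (fun j : ℕ => ‖M‖ ^ (2 * j) / (2 * j).factorial) :=
    (Real.summable_pow_div_factorial ‖M‖).comp_injective (fun a b h => by omega)
  have hs : Summable (fun j : ℕ => ((-1 : ℝ) ^ j / (2 * j).factorial) • M ^ (2 * j)) := by
    refine Summable.of_norm_bounded_eventually_nat hb ?_
    filter_upwards [Filter.eventually_ge_atTop 1] with j hj
    rw [norm_smul]
    have h1 : ‖((-1 : ℝ) ^ j / ((2 * j).factorial : ℝ))‖ = (((2 * j).factorial : ℝ))⁻¹ := by
      rw [norm_div, norm_pow, norm_neg, norm_one, one_pow]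
      simp
    rw [h1]
    have h2 : ‖M ^ (2 * j)‖ ≤ ‖M‖ ^ (2 * j) := norm_pow_le' M (by omega)
    calc (((2 * j).factorial : ℝ))⁻¹ * ‖M ^ (2 * j)‖
        ≤ (((2 * j).factorial : ℝ))⁻¹ * ‖M‖ ^ (2 * j) :=
          mul_le_mul_of_nonneg_left h2 (by positivity)
      _ = ‖M‖ ^ (2 * j) / (2 * j).factorial := by ring
  exact hs.hasSum

lemma hasSum_msin {k : ℕ} (M : Matrix (Fin k) (Fin k) ℝ) :
    HasSum (fun j : ℕ => ((-1 : ℝ) ^ j / (2 * j + 1).factorial) • M ^ (2 * j + 1)) (msin M) := by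
  letI : NormedRing (Matrix (Fin k) (Fin k) ℝ) := Matrix.linftyOpNormedRing
  letI : NormedAlgebra ℝ (Matrix (Fin k) (Fin k) ℝ) := Matrix.linftyOpNormedAlgebra
  have hb : Summable (fun j : ℕ => ‖M‖ ^ (2 * j + 1) / (2 * j + 1).factorial) :=
    (Real.summable_pow_div_factorial ‖M‖).comp_injective (fun a b h => by omega)
  have hs : Summable (fun j : ℕ => ((-1 : ℝ) ^ j / (2 * j + 1).factorial) • M ^ (2 * j + 1)) := by
    refine Summable.of_norm_bounded hb ?_
    intro j
    rw [norm_smul]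
    have h1 : ‖((-1 : ℝ) ^ j / ((2 * j + 1).factorial : ℝ))‖ =
        (((2 * j + 1).factorial : ℝ))⁻¹ := by
      rw [norm_div, norm_pow, norm_neg, norm_one, one_pow]
      simp
    rw [h1]
    have h2 : ‖M ^ (2 * j + 1)‖ ≤ ‖M‖ ^ (2 * j + 1) := norm_pow_le' M (by omega)
    calc (((2 * j + 1).factorial : ℝ))⁻¹ * ‖M ^ (2 * j + 1)‖
        ≤ (((2 * j + 1).factorial : ℝ))⁻¹ * ‖M‖ ^ (2 * j + 1) :=
          mul_le_mul_of_nonneg_left h2 (by positivity)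
      _ = ‖M‖ ^ (2 * j + 1) / (2 * j + 1).factorial := by ring
  exact hs.hasSum

lemma Jsq {k : ℕ} (M : Matrix (Fin k) (Fin k) ℝ) :
    (fromBlocks 0 (-M) M 0 : Matrix (Fin k ⊕ Fin k) (Fin k ⊕ Fin k) ℝ) ^ 2 =
      fromBlocks (-(M * M)) 0 0 (-(M * M)) := by
  rw [pow_two, fromBlocks_multiply]
  simp

lemma Jpow_even {k : ℕ} (M : Matrix (Fin k) (Fin k) ℝ) (j : ℕ) :
    (fromBlocks 0 (-M) M 0 : Matrix (Fin k ⊕ Fin k) (Fin k ⊕ Fin k) ℝ) ^ (2 * j) =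
      fromBlocks (((-1 : ℝ) ^ j) • M ^ (2 * j)) 0 0 (((-1 : ℝ) ^ j) • M ^ (2 * j)) := by
  induction j with
  | zero => simp [fromBlocks_one]
  | succ j ih =>
    have h2 : 2 * (j + 1) = 2 * j + 2 := by ring
    have hblock : ((-1 : ℝ) ^ j • M ^ (2 * j)) * (-(M * M)) =
        ((-1 : ℝ) ^ (j + 1)) • M ^ (2 * j + 2) := by
      rw [Matrix.mul_neg, Matrix.smul_mul, ← neg_smul, pow_succ, pow_succ, pow_succ,
        Matrix.mul_assoc]
      ring_nf
    rw [h2, pow_add, ih, Jsq, fromBlocks_multiply]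
    simp [hblock]

lemma Jpow_odd {k : ℕ} (M : Matrix (Fin k) (Fin k) ℝ) (j : ℕ) :
    (fromBlocks 0 (-M) M 0 : Matrix (Fin k ⊕ Fin k) (Fin k ⊕ Fin k) ℝ) ^ (2 * j + 1) =
      fromBlocks 0 (-(((-1 : ℝ) ^ j) • M ^ (2 * j + 1)))
        (((-1 : ℝ) ^ j) • M ^ (2 * j + 1)) 0 := by
  rw [pow_succ, Jpow_even, fromBlocks_multiply]
  simp [Matrix.smul_mul, pow_succ]

lemma exp_J {k : ℕ} (M : Matrix (Fin k) (Fin k) ℝ) :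
    NormedSpace.exp (fromBlocks 0 (-M) M 0 : Matrix (Fin k ⊕ Fin k) (Fin k ⊕ Fin k) ℝ) =
      fromBlocks (mcos M) (-(msin M)) (msin M) (mcos M) := by
  rw [exp_eq_tsum (𝕂 := ℝ)]
  refine HasSum.tsum_eq ?_
  set J : Matrix (Fin k ⊕ Fin k) (Fin k ⊕ Fin k) ℝ := fromBlocks 0 (-M) M 0 with hJ
  set f : ℕ → Matrix (Fin k ⊕ Fin k) (Fin k ⊕ Fin k) ℝ :=
    fun n => ((n.factorial : ℝ))⁻¹ • J ^ n with hf
  have he : HasSum (fun j : ℕ => f (2 * j)) (fromBlocks (mcos M) 0 0 (mcos M)) := by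
    have hfun : (fun j : ℕ => f (2 * j)) =
        fun j : ℕ => fromBlocks (((-1 : ℝ) ^ j / (2 * j).factorial) • M ^ (2 * j)) 0 0
          (((-1 : ℝ) ^ j / (2 * j).factorial) • M ^ (2 * j)) := by
      funext j
      simp only [hf]
      rw [hJ, Jpow_even, fromBlocks_smul, smul_zero, smul_smul, inv_mul_eq_div]
    rw [hfun]
    exact hasSum_fromBlocks (hasSum_mcos M) hasSum_zero hasSum_zero (hasSum_mcos M)
  have ho : HasSum (fun j : ℕ => f (2 * j + 1)) (fromBlocks 0 (-(msin M)) (msin M) 0) := by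
    have hfun : (fun j : ℕ => f (2 * j + 1)) =
        fun j : ℕ => fromBlocks 0 (-(((-1 : ℝ) ^ j / (2 * j + 1).factorial) • M ^ (2 * j + 1)))
          (((-1 : ℝ) ^ j / (2 * j + 1).factorial) • M ^ (2 * j + 1)) 0 := by
      funext j
      simp only [hf]
      rw [hJ, Jpow_odd, fromBlocks_smul, smul_zero, smul_neg, smul_smul, inv_mul_eq_div]
    rw [hfun]
    exact hasSum_fromBlocks hasSum_zero (hasSum_msin M).neg (hasSum_msin M) hasSum_zero
  have key := he.even_add_odd ho
  have hsum : fromBlocks (mcos M) 0 0 (mcos M) + fromBlocks 0 (-(msin M)) (msin M) 0 =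
      fromBlocks (mcos M) (-(msin M)) (msin M) (mcos M) := by
    rw [fromBlocks_add]; simp
  rwa [hsum] at key

lemma my_conj_pow {n₁ n₂ : Type*} [Fintype n₁] [Fintype n₂] [DecidableEq n₁] [DecidableEq n₂]
    (C : Matrix n₁ n₂ ℝ) (hC : Cᵀ * C = 1) (M : Matrix n₂ n₂ ℝ) (n : ℕ) :
    (C * M * Cᵀ) ^ (n + 1) = C * M ^ (n + 1) * Cᵀ := by
  induction n with
  | zero => simp
  | succ n ih =>
    rw [pow_succ, ih, pow_succ]
    calc C * M ^ (n + 1) * Cᵀ * (C * M * Cᵀ)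
        = C * M ^ (n + 1) * (Cᵀ * C) * M * Cᵀ := by
          simp only [Matrix.mul_assoc]
      _ = C * (M ^ (n + 1) * M) * Cᵀ := by rw [hC]; simp only [Matrix.mul_one, Matrix.mul_assoc]

lemma exp_semi_conj {n₁ n₂ : Type*} [Fintype n₁] [Fintype n₂] [DecidableEq n₁] [DecidableEq n₂]
    (C : Matrix n₁ n₂ ℝ) (hC : Cᵀ * C = 1) (M : Matrix n₂ n₂ ℝ) :
    NormedSpace.exp (C * M * Cᵀ) = 1 - C * Cᵀ + C * NormedSpace.exp M * Cᵀ := by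
  have hM : HasSum (fun n : ℕ => ((n.factorial : ℝ))⁻¹ • M ^ n) (NormedSpace.exp M) := by
    letI : NormedRing (Matrix n₂ n₂ ℝ) := Matrix.linftyOpNormedRing
    letI : NormedAlgebra ℝ (Matrix n₂ n₂ ℝ) := Matrix.linftyOpNormedAlgebra
    exact exp_series_hasSum_exp' (𝕂 := ℝ) M
  have h1 : HasSum (fun n : ℕ => C * (((n.factorial : ℝ))⁻¹ • M ^ n) * Cᵀ)
      (C * NormedSpace.exp M * Cᵀ) :=
    hM.map (AddMonoidHom.mk' (fun X : Matrix n₂ n₂ ℝ => C * X * Cᵀ)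
        (fun a b => by simp [Matrix.mul_add, Matrix.add_mul]))
      ((continuous_const.matrix_mul continuous_id).matrix_mul continuous_const)
  have h2 : HasSum (fun n : ℕ => ((n.factorial : ℝ))⁻¹ • (C * M ^ n * Cᵀ))
      (C * NormedSpace.exp M * Cᵀ) := by
    have hfun : (fun n : ℕ => ((n.factorial : ℝ))⁻¹ • (C * M ^ n * Cᵀ)) =
        fun n : ℕ => C * (((n.factorial : ℝ))⁻¹ • M ^ n) * Cᵀ := by
      funext n
      rw [Matrix.mul_smul, Matrix.smul_mul]
    rw [hfun]
    exact h1
  have h3 := h2.update 0 1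
  have hupdate : Function.update
      (fun n : ℕ => ((n.factorial : ℝ))⁻¹ • (C * M ^ n * Cᵀ)) 0 1 =
      fun n : ℕ => ((n.factorial : ℝ))⁻¹ • (C * M * Cᵀ) ^ n := by
    funext n
    rcases n with _ | n
    · simp [Function.update]
    · rw [Function.update_of_ne (Nat.succ_ne_zero n), my_conj_pow C hC M n]
  rw [hupdate] at h3
  rw [exp_eq_tsum (𝕂 := ℝ)]
  show (∑' n : ℕ, ((n.factorial : ℝ))⁻¹ • (C * M * Cᵀ) ^ n) = _
  rw [h3.tsum_eq, pow_zero, Matrix.mul_one, Nat.factorial_zero]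
  simp

end Helpers

/-- Closed form for `expm(t[[0,−Rᵀ],[R,0]])` when `R = ΣVᵀ` with `VᵀV = I_k` and `S`
symmetric: it equals
`[[I_d − VVᵀ, 0],[0,0]] + C·[[cos(tS), −sin(tS)],[sin(tS), cos(tS)]]·Cᵀ`
with `C = [[V,0],[0,I_k]]`. -/
theorem grassmann_exp_closed_form (d k : ℕ) (t : ℝ)
    (V : Matrix (Fin d) (Fin k) ℝ) (hV : Vᵀ * V = 1)
    (S : Matrix (Fin k) (Fin k) ℝ) (hS : Sᵀ = S)
    (R : Matrix (Fin k) (Fin d) ℝ) (hR : R = S * Vᵀ)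
    (C : Matrix (Fin d ⊕ Fin k) (Fin k ⊕ Fin k) ℝ)
    (hC : C = fromBlocks V 0 0 (1 : Matrix (Fin k) (Fin k) ℝ)) :
    NormedSpace.exp (t • fromBlocks (0 : Matrix (Fin d) (Fin d) ℝ) (-Rᵀ) R
        (0 : Matrix (Fin k) (Fin k) ℝ)) =
      fromBlocks (1 - V * Vᵀ) 0 0 (0 : Matrix (Fin k) (Fin k) ℝ) +
        C * fromBlocks (mcos (t • S)) (-msin (t • S)) (msin (t • S)) (mcos (t • S)) *
          Cᵀ := by
  have hCC : Cᵀ * C = 1 := by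
    rw [hC, fromBlocks_transpose, fromBlocks_multiply]
    simpa [hV] using fromBlocks_one
  have hA : t • fromBlocks (0 : Matrix (Fin d) (Fin d) ℝ) (-Rᵀ) R
      (0 : Matrix (Fin k) (Fin k) ℝ) = C * (fromBlocks 0 (-(t • S)) (t • S) 0) * Cᵀ := by
    rw [hC, hR, fromBlocks_transpose, fromBlocks_multiply, fromBlocks_multiply]
    simp [Matrix.transpose_mul, hS, fromBlocks_smul, Matrix.mul_smul, Matrix.smul_mul]
  rw [hA, exp_semi_conj C hCC, exp_J]
  congr 1
  rw [hC, fromBlocks_transpose, fromBlocks_multiply]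
  simp only [Matrix.mul_zero, Matrix.zero_mul, Matrix.mul_one, Matrix.one_mul, add_zero, zero_add,
    Matrix.transpose_zero]
  rw [← fromBlocks_one, sub_eq_add_neg, fromBlocks_neg, fromBlocks_add]
  simp [sub_eq_add_neg]
end
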